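/- For every r > 0 and every index i with 1 ≤ i ≤ n, the component φ_i is square-integrable on [r,∞), i.e. ∫_r^∞ φ_i(s)² ds < ∞; in fact ∫_r^∞ φ_i(s)² ds ≤ (α_r)_{i,i}. -/

import Mathlib

open MeasureTheory Filter Topology Matrix Set

/-!
The Gramian `m_t` increases in the Loewner order, and by Lebesgue's differentiation theorem
`m_t' = f(t) f(t)ᵀ` for almost every `t`. Hence `α_t = m_t⁻¹` decreases, and wherever `m` is
differentiable `α_t' = -α_t f(t) f(t)ᵀ α_t`, whose `(i, i)` entry is `-φ_i(t)²`. So `-(α_t)ᵢᵢ` is a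
monotone function, bounded above by `0` because `α_t` is positive definite, whose a.e. derivative
is `φ_i²`; and the integral of the derivative of a monotone function is at most its increment.
-/

theorem MonotoneOn.integrableOn_deriv_Ioi_and_integral_le {G : ℝ → ℝ} {r C : ℝ}
    (hG : MonotoneOn G (Ici r)) (hC : ∀ t ≥ r, G t ≤ C) :
    IntegrableOn (deriv G) (Ioi r) ∧ ∫ t in Ioi r, deriv G t ≤ C - G r := by
  have hmono {b : ℝ} (hb : r ≤ b) : MonotoneOn G (uIcc r b) :=
    hG.mono (uIcc_of_le hb ▸ Icc_subset_Ici_self)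
  have hint {b : ℝ} (hb : r ≤ b) : IntegrableOn (deriv G) (Ioc r b) :=
    (intervalIntegrable_iff_integrableOn_Ioc_of_le hb).mp (hmono hb).intervalIntegrable_deriv
  have hbound {b : ℝ} (hb : r ≤ b) : ∫ t in r..b, deriv G t ≤ C - G r := by
    have h := (hmono hb).intervalIntegral_deriv_mem_uIcc
    rw [uIcc_of_le (sub_nonneg.mpr (hG self_mem_Ici hb hb))] at h
    linarith [h.2, hC b hb]
  have hnonneg {t : ℝ} (ht : r < t) : 0 ≤ deriv G t :=
    derivWithin_of_mem_nhds (f := G) (Ici_mem_nhds ht) ▸ hG.derivWithin_nonneg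
  have hIoi : IntegrableOn (deriv G) (Ioi r) := by
    refine integrableOn_Ioi_of_intervalIntegral_norm_bounded (C - G r) r
      (fun b => (hint (le_max_left r b)).mono_set (Ioc_subset_Ioc_right (le_max_right r b)))
      tendsto_id ?_
    filter_upwards [eventually_ge_atTop r] with b hb
    rw [intervalIntegral.integral_congr_ae (g := deriv G) (Eventually.of_forall fun t ht =>
      Real.norm_of_nonneg (hnonneg ((uIoc_of_le hb ▸ ht).1)))]
    exact hbound hb
  refine ⟨hIoi, le_of_tendsto (intervalIntegral_tendsto_integral_Ioi r hIoi tendsto_id) ?_⟩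
  filter_upwards [eventually_ge_atTop r] with b hb using hbound hb

theorem ae_hasDerivAt_setIntegral_Ioc {E : Type*} [NormedAddCommGroup E] [NormedSpace ℝ E]
    [CompleteSpace E] {g : ℝ → E} {a : ℝ}
    (hg : ∀ t > a, IntegrableOn g (Ioc a t)) :
    ∀ᵐ t, a < t → HasDerivAt (fun x => ∫ s in Ioc a x, g s) (g t) t := by
  have hN : ∀ᵐ t, ∀ N : ℕ, t ∈ uIcc a (a + N + 1) →
      HasDerivAt (fun x => ∫ s in a..x, g s) (g t) t := by
    refine ae_all_iff.mpr fun N => ?_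
    have hlt : a < a + N + 1 := by linarith [N.cast_nonneg (α := ℝ)]
    filter_upwards [((intervalIntegrable_iff_integrableOn_Ioc_of_le hlt.le).mpr
      (hg _ hlt)).ae_hasDerivAt_integral] with t ht hmem
    exact ht hmem a left_mem_uIcc
  filter_upwards [hN] with t ht hat
  obtain ⟨N, hNt⟩ := exists_nat_gt (t - a)
  refine (ht N ?_).congr_of_eventuallyEq ?_
  · rw [uIcc_of_le (by linarith)]
    exact ⟨hat.le, by linarith⟩
  · filter_upwards [Ioi_mem_nhds hat] with x hx
    exact (intervalIntegral.integral_of_le (f := g) hx.le).symm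

theorem Matrix.PosDef.posSemidef_inv_sub_inv {ι K : Type*} [Fintype ι] [DecidableEq ι] [Field K]
    [PartialOrder K] [StarRing K] [StarOrderedRing K] {A B : Matrix ι ι K}
    (hA : A.PosDef) (hB : B.PosDef) (hAB : (B - A).PosSemidef) : (A⁻¹ - B⁻¹).PosSemidef := by
  have := hB.isUnit.invertible
  have := hA.inv.isUnit.invertible
  -- `A⁻¹ - B⁻¹` and `B - A` are the two Schur complements of `fromBlocks B 1 1 A⁻¹`.
  have h₁ := PosDef.fromBlocks₁₁ (1 : Matrix ι ι K) A⁻¹ hB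
  have h₂ := PosDef.fromBlocks₂₂ B (1 : Matrix ι ι K) hA.inv
  rw [nonsing_inv_nonsing_inv A ((isUnit_iff_isUnit_det A).mp hA.isUnit)] at h₂
  simp only [conjTranspose_one, Matrix.mul_one, Matrix.one_mul] at h₁ h₂
  exact h₁.mp (h₂.mpr hAB)

theorem Matrix.mul_vecMulVec_mul_apply_self {ι R : Type*} [Fintype ι] [CommSemiring R]
    {A : Matrix ι ι R} (hA : Aᵀ = A) (v : ι → R) (i : ι) :
    (A * vecMulVec v v * A) i i = (A *ᵥ v) i ^ 2 := by
  rw [Matrix.mul_vecMulVec, vecMulVec_mul, ← mulVec_transpose, hA, vecMulVec_apply, sq]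

theorem Matrix.hasDerivAt_nonsing_inv_apply {ι 𝕜 : Type*} [Fintype ι] [DecidableEq ι]
    [NontriviallyNormedField 𝕜] {M : 𝕜 → Matrix ι ι 𝕜} {M' : Matrix ι ι 𝕜} {t : 𝕜}
    (hM : ∀ j k, HasDerivAt (fun x => M x j k) (M' j k) t) (ht : IsUnit (M t).det) (i k : ι) :
    HasDerivAt (fun x => (M x)⁻¹ i k) (-((M t)⁻¹ * M' * (M t)⁻¹) i k) t := by
  have hcont : ContinuousAt M t :=
    continuousAt_pi.mpr fun j => continuousAt_pi.mpr fun k => (hM j k).continuousAt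
  have hinv : Tendsto (fun x => (M x)⁻¹) (𝓝[≠] t) (𝓝 (M t)⁻¹) :=
    ((continuousAt_matrix_inv _ (NormedRing.inverse_continuousAt ht.unit)).comp
      hcont).tendsto.mono_left nhdsWithin_le_nhds
  have hslope : Tendsto (fun x => (x - t)⁻¹ • (M x - M t)) (𝓝[≠] t) (𝓝 M') :=
    tendsto_pi_nhds.mpr fun j => tendsto_pi_nhds.mpr fun k =>
      hasDerivAt_iff_tendsto_slope.mp (hM j k)
  have hunit : ∀ᶠ x in 𝓝[≠] t, IsUnit (M x).det :=
    nhdsWithin_le_nhds <| ((continuous_id.matrix_det.continuousAt.comp hcont).eventually_ne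
      ht.ne_zero).mono fun x hx => isUnit_iff_ne_zero.mpr hx
  rw [hasDerivAt_iff_tendsto_slope]
  refine Tendsto.congr' ?_
    ((((hinv.mul hslope).mul tendsto_const_nhds).neg.apply_nhds i).apply_nhds k)
  filter_upwards [hunit] with x hx
  rw [slope_def_field]
  have hunits : IsUnit (M x) ↔ IsUnit (M t) :=
    iff_of_true ((isUnit_iff_isUnit_det _).mpr hx) ((isUnit_iff_isUnit_det _).mpr ht)
  rw [← sub_apply, Matrix.inv_sub_inv hunits, ← neg_sub (M x), Matrix.mul_neg, Matrix.neg_mul,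
    Matrix.mul_smul, Matrix.smul_mul, neg_apply, neg_apply, smul_apply, smul_eq_mul, div_eq_inv_mul,
    mul_neg]

noncomputable def integralGram {X ι : Type*} [MeasurableSpace X] (μ : Measure X)
    (f : X → ι → ℝ) : Matrix ι ι ℝ :=
  Matrix.of fun j k => ∫ x, f x j * f x k ∂μ

section integralGram

variable {X ι : Type*} [MeasurableSpace X] {μ ν : Measure X} {f : X → ι → ℝ}

theorem integralGram_eq_gram (hf : ∀ j, MemLp (fun x => f x j) 2 μ) :
    integralGram μ f = gram ℝ fun j => (hf j).toLp := by
  ext j k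
  rw [gram_apply, L2.inner_def]
  refine integral_congr_ae ?_
  filter_upwards [(hf j).coeFn_toLp, (hf k).coeFn_toLp] with x hj hk
  simp [hj, hk, mul_comm]

theorem posSemidef_integralGram [Finite ι] (hf : ∀ j, MemLp (fun x => f x j) 2 μ) :
    (integralGram μ f).PosSemidef :=
  integralGram_eq_gram hf ▸ posSemidef_gram ℝ _

theorem integralGram_add_measure (hfμ : ∀ j, MemLp (fun x => f x j) 2 μ)
    (hfν : ∀ j, MemLp (fun x => f x j) 2 ν) :
    integralGram (μ + ν) f = integralGram μ f + integralGram ν f := by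
  ext j k
  exact integral_add_measure ((hfμ j).integrable_mul (hfμ k)) ((hfν j).integrable_mul (hfν k))

end integralGram

noncomputable def gramian {ι : Type*} (f : ℝ → ι → ℝ) (t : ℝ) : Matrix ι ι ℝ :=
  integralGram (volume.restrict (Ioc 0 t)) f

section gramian

variable {ι : Type*} {f : ℝ → ι → ℝ}

theorem gramian_transpose (t : ℝ) : (gramian f t)ᵀ = gramian f t := by
  ext j k
  simp only [gramian, integralGram, transpose_apply, of_apply, mul_comm]

theorem gramian_sub_gramian {s t : ℝ}
    (hf : ∀ j, MemLp (fun x => f x j) 2 (volume.restrict (Ioc 0 t))) (hs : 0 ≤ s) (hst : s ≤ t) :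
    gramian f t - gramian f s = integralGram (volume.restrict (Ioc s t)) f := by
  have hIoc :
      volume.restrict (Ioc 0 t) = volume.restrict (Ioc 0 s) + volume.restrict (Ioc s t) := by
    rw [← Ioc_union_Ioc_eq_Ioc hs hst,
      Measure.restrict_union (Ioc_disjoint_Ioc_of_le le_rfl) measurableSet_Ioc]
  have hf' j : MemLp (fun x => f x j) 2 (volume.restrict (Ioc 0 s) + volume.restrict (Ioc s t)) :=
    hIoc ▸ hf j
  rw [gramian, hIoc, integralGram_add_measure (fun j => (hf' j).left_of_add_measure)
    (fun j => (hf' j).right_of_add_measure), gramian, add_sub_cancel_left]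

theorem posDef_gramian [Fintype ι] [DecidableEq ι] {t : ℝ}
    (hf : ∀ j, MemLp (fun x => f x j) 2 (volume.restrict (Ioc 0 t)))
    (hunit : IsUnit (gramian f t)) : (gramian f t).PosDef :=
  (posSemidef_integralGram hf).posDef_iff_isUnit.mpr hunit

theorem posSemidef_inv_gramian_sub_inv_gramian [Fintype ι] [DecidableEq ι] {s t : ℝ}
    (hf : ∀ j, MemLp (fun x => f x j) 2 (volume.restrict (Ioc 0 t)))
    (hunit_s : IsUnit (gramian f s)) (hunit_t : IsUnit (gramian f t)) (hs : 0 ≤ s) (hst : s ≤ t) :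
    ((gramian f s)⁻¹ - (gramian f t)⁻¹).PosSemidef := by
  have hf_s j : MemLp (fun x => f x j) 2 (volume.restrict (Ioc 0 s)) :=
    (hf j).mono_measure (Measure.restrict_mono (Ioc_subset_Ioc_right hst) le_rfl)
  refine (posDef_gramian hf_s hunit_s).posSemidef_inv_sub_inv (posDef_gramian hf hunit_t) ?_
  rw [gramian_sub_gramian hf hs hst]
  exact posSemidef_integralGram fun j =>
    (hf j).mono_measure (Measure.restrict_mono (Ioc_subset_Ioc_left hs) le_rfl)

theorem ae_hasDerivAt_gramian_apply [Finite ι]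
    (hf : ∀ t > 0, ∀ j, MemLp (fun s => f s j) 2 (volume.restrict (Ioc 0 t))) :
    ∀ᵐ t, 0 < t → ∀ j k, HasDerivAt (fun x => gramian f x j k) (f t j * f t k) t := by
  have hjk : ∀ j k, ∀ᵐ t, 0 < t → HasDerivAt (fun x => gramian f x j k) (f t j * f t k) t :=
    fun j k => ae_hasDerivAt_setIntegral_Ioc fun t ht => (hf t ht j).integrable_mul (hf t ht k)
  filter_upwards [ae_all_iff.mpr fun j => ae_all_iff.mpr (hjk j)] with t ht ht0 j k
  exact ht j k ht0

theorem ae_hasDerivAt_inv_gramian_apply [Fintype ι] [DecidableEq ι]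
    (hf : ∀ t > 0, ∀ j, MemLp (fun s => f s j) 2 (volume.restrict (Ioc 0 t)))
    (hunit : ∀ t > 0, IsUnit (gramian f t)) (i : ι) :
    ∀ᵐ t, 0 < t →
      HasDerivAt (fun x => (gramian f x)⁻¹ i i) (-((gramian f t)⁻¹ *ᵥ f t) i ^ 2) t := by
  filter_upwards [ae_hasDerivAt_gramian_apply hf] with t ht ht0
  have hsymm : ((gramian f t)⁻¹)ᵀ = (gramian f t)⁻¹ := by
    rw [transpose_nonsing_inv, gramian_transpose]
  rw [← mul_vecMulVec_mul_apply_self hsymm]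
  exact hasDerivAt_nonsing_inv_apply (M' := vecMulVec (f t) (f t)) (ht ht0)
    ((isUnit_iff_isUnit_det _).mp (hunit t ht0)) i i

end gramian

theorem phi_square_integrable_away_from_zero_general
    (n : ℕ)
    (f : ℝ → Fin n → ℝ)
    (hf_meas : ∀ i, Measurable fun s => f s i)
    (hf_loc : ∀ i, ∀ t > (0 : ℝ), IntegrableOn (fun s => (f s i) ^ 2) (Set.Ioc 0 t))
    (m : ℝ → Matrix (Fin n) (Fin n) ℝ)
    (hm : ∀ t, m t = Matrix.of fun i j => ∫ s in Set.Ioc 0 t, f s i * f s j)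
    (hm_inv : ∀ t > (0 : ℝ), IsUnit (m t))
    (α : ℝ → Matrix (Fin n) (Fin n) ℝ)
    (hα : ∀ t, α t = (m t)⁻¹)
    (φ : ℝ → Fin n → ℝ)
    (hφ : ∀ t, φ t = (α t).mulVec (f t)) :
    ∀ r > (0 : ℝ), ∀ i : Fin n,
      IntegrableOn (fun s => (φ s i) ^ 2) (Set.Ioi r) ∧
      (∫ s in Set.Ioi r, (φ s i) ^ 2) ≤ α r i i := by
  obtain rfl : φ = fun t => α t *ᵥ f t := funext hφ
  obtain rfl : α = fun t => (m t)⁻¹ := funext hα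
  obtain rfl : m = gramian f := funext hm
  intro r hr i
  have hf : ∀ t > 0, ∀ j, MemLp (fun s => f s j) 2 (volume.restrict (Ioc 0 t)) := fun t ht j =>
    (memLp_two_iff_integrable_sq (hf_meas j).aestronglyMeasurable).mpr (hf_loc j t ht)
  set G : ℝ → ℝ := fun t => -(gramian f t)⁻¹ i i
  have hGmono : MonotoneOn G (Ici r) := fun s hs t ht hst => neg_le_neg <| sub_nonneg.mp
    (posSemidef_inv_gramian_sub_inv_gramian (hf t (hr.trans_le ht)) (hm_inv s (hr.trans_le hs))
      (hm_inv t (hr.trans_le ht)) (hr.trans_le hs).le hst).diag_nonneg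
  have hGnonpos : ∀ t ≥ r, G t ≤ 0 := fun t ht => by
    have hpos := posDef_gramian (hf t (hr.trans_le ht)) (hm_inv t (hr.trans_le ht))
    exact neg_nonpos.mpr hpos.inv.posSemidef.diag_nonneg
  obtain ⟨hint, hle⟩ := hGmono.integrableOn_deriv_Ioi_and_integral_le hGnonpos
  have hderiv :
      (fun s => ((gramian f s)⁻¹ *ᵥ f s) i ^ 2) =ᵐ[volume.restrict (Ioi r)] deriv G := by
    rw [EventuallyEq, ae_restrict_iff' measurableSet_Ioi]
    filter_upwards [ae_hasDerivAt_inv_gramian_apply hf hm_inv i] with t ht htr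
    exact ((ht (hr.trans htr)).neg.deriv.trans (neg_neg _)).symm
  refine ⟨hint.congr_fun_ae hderiv.symm, ?_⟩
  rw [integral_congr_ae hderiv]
  simpa [G] using hle

/-- For every r > 0 and every index i, the component φ_i is square-integrable on [r,∞);
in fact ∫_r^∞ φ_i(s)² ds ≤ (α_r)_{i,i}. -/
theorem phi_square_integrable_away_from_zero
    (n : ℕ) (hn : 1 ≤ n)
    (f : ℝ → Fin n → ℝ)
    (hf_meas : ∀ i, Measurable fun s => f s i)
    (hf_loc : ∀ i, ∀ t > (0 : ℝ), IntegrableOn (fun s => (f s i) ^ 2) (Set.Ioc 0 t))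
    (m : ℝ → Matrix (Fin n) (Fin n) ℝ)
    (hm : ∀ t, m t = Matrix.of fun i j => ∫ s in Set.Ioc 0 t, f s i * f s j)
    (hm_inv : ∀ t > (0 : ℝ), IsUnit (m t))
    (α : ℝ → Matrix (Fin n) (Fin n) ℝ)
    (hα : ∀ t, α t = (m t)⁻¹)
    (φ : ℝ → Fin n → ℝ)
    (hφ : ∀ t, φ t = (α t).mulVec (f t)) :
    ∀ r > (0 : ℝ), ∀ i : Fin n,
      IntegrableOn (fun s => (φ s i) ^ 2) (Set.Ioi r) ∧
      (∫ s in Set.Ioi r, (φ s i) ^ 2) ≤ α r i i :=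
  phi_square_integrable_away_from_zero_general n f hf_meas hf_loc m hm hm_inv α hα φ hφ
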